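/- arXiv:math/0410083 — 2 statements merged into one kernel-verified Lean document; each statement's English description precedes it below -/
import Mathlib

section
/- Let g : [0,1] → [0,∞) be measurable with g(x)(1−x) ≤ g* for all x ∈ [0,1], and suppose g satisfies: there exist q > 0, α > 0, ε > 0 with |g(x) − q| ≤ C x^α for x ∈ (0,ε]. Define C_k(m) = ∫₀¹ x^k (1−x)^m g(x) dx. Then m^{k+1} C_k(m) → q·Γ(k+1) as m → ∞, for each integer k ≥ 0. -/
/-!
Split `g = q + (g - q)`. The Beta integral `∫₀¹ x^k (1-x)^m = k! / ((m+1) ⋯ (m+k+1))` gives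
`m^(k+1) ∫₀¹ x^k (1-x)^m → k!`, and this scaled integral never exceeds `k!`. For the remainder
choose `δ` with `|g - q| ≤ η` on `(0, δ]`: that part contributes at most `η k!` after scaling,
while on `(δ, 1]` the bound `g(x)(1-x) ≤ g*` makes the integrand at most `(g* + |q|)(1-δ)^(m-1)`,
which is killed by the geometric decay against `m^(k+1)`.
-/

open Filter Set MeasureTheory Topology
open scoped Nat

theorem integral_pow_mul_one_sub_pow (k m : ℕ) :
    ∫ x in (0:ℝ)..1, x ^ k * (1 - x) ^ m
      = k ! / ∏ j ∈ Finset.range (k + 1), ((m : ℝ) + 1 + j) := by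
  have hm : 0 < ((m : ℂ) + 1).re := by simp; positivity
  have hbeta := Complex.betaIntegral_eval_nat_add_one_right hm k
  rw [← Complex.betaIntegral_symm] at hbeta
  apply Complex.ofReal_injective
  rw [← intervalIntegral.integral_ofReal]
  convert hbeta using 1
  · refine intervalIntegral.integral_congr fun x _ => ?_
    simp only [add_sub_cancel_right, Complex.cpow_natCast]
    push_cast
    ring
  · push_cast
    ring

theorem pow_le_prod_add_one_add (k : ℕ) {a : ℝ} (ha : 0 ≤ a) :
    a ^ (k + 1) ≤ ∏ j ∈ Finset.range (k + 1), (a + 1 + j) := by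
  rw [← Finset.card_range (k + 1), ← Finset.prod_const, Finset.card_range]
  exact Finset.prod_le_prod (fun _ _ => ha) fun j _ => by linarith [(Nat.cast_nonneg j : (0:ℝ) ≤ j)]

theorem pow_mul_integral_pow_mul_one_sub_pow_le (k m : ℕ) :
    (m : ℝ) ^ (k + 1) * ∫ x in (0:ℝ)..1, x ^ k * (1 - x) ^ m ≤ k ! := by
  have hprod : 0 < ∏ j ∈ Finset.range (k + 1), ((m : ℝ) + 1 + j) :=
    Finset.prod_pos fun j _ => by positivity
  rw [integral_pow_mul_one_sub_pow, mul_div_assoc', div_le_iff₀ hprod, mul_comm]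
  exact mul_le_mul_of_nonneg_left (pow_le_prod_add_one_add k m.cast_nonneg) (by positivity)

theorem tendsto_pow_mul_integral_pow_mul_one_sub_pow (k : ℕ) :
    Tendsto (fun m : ℕ => (m : ℝ) ^ (k + 1) * ∫ x in (0:ℝ)..1, x ^ k * (1 - x) ^ m)
      atTop (𝓝 (k ! : ℝ)) := by
  have hratio : Tendsto (fun m : ℕ => ∏ j ∈ Finset.range (k + 1), ((m : ℝ) / (m + 1 + j)))
      atTop (𝓝 1) := by
    have := tendsto_finsetProd (Finset.range (k + 1)) fun (j : ℕ) _ =>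
      tendsto_natCast_div_add_atTop (𝕜 := ℝ) (1 + j)
    simpa only [Finset.prod_const_one, add_assoc] using this
  convert hratio.const_mul (k ! : ℝ) using 1
  · ext m
    rw [integral_pow_mul_one_sub_pow, Finset.prod_div_distrib, Finset.prod_const,
      Finset.card_range]
    ring
  · simp

theorem tendsto_zero_of_forall_abs_le_mul_add {ι : Type*} {l : Filter ι} {a : ι → ℝ} (M : ℝ)
    (h : ∀ η > 0, ∃ c : ι → ℝ, Tendsto c l (𝓝 0) ∧ ∀ᶠ i in l, |a i| ≤ η * M + c i) :
    Tendsto a l (𝓝 0) := by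
  rw [Metric.tendsto_nhds]
  intro ε hε
  obtain ⟨c, hc, hbound⟩ := h (ε / (2 * (|M| + 1))) (by positivity)
  filter_upwards [hbound, hc.eventually (gt_mem_nhds (half_pos hε))] with i hi hci
  have hηM : ε / (2 * (|M| + 1)) * M ≤ ε / 2 := by
    calc ε / (2 * (|M| + 1)) * M ≤ ε / (2 * (|M| + 1)) * (|M| + 1) :=
          mul_le_mul_of_nonneg_left ((le_abs_self M).trans (lt_add_one _).le) (by positivity)
      _ = ε / 2 := by field_simp
  rw [Real.dist_eq, sub_zero]
  linarith

section Weighted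

variable {g : ℝ → ℝ} {gstar : ℝ}

theorem intervalIntegrable_pow_mul_one_sub_pow_succ_mul (hmeas : Measurable g)
    (hnonneg : ∀ x, 0 ≤ g x) (hbound : ∀ x ∈ Icc (0:ℝ) 1, g x * (1 - x) ≤ gstar) (k n : ℕ) :
    IntervalIntegrable (fun x => x ^ k * (1 - x) ^ (n + 1) * g x) volume 0 1 := by
  refine (intervalIntegrable_const (c := gstar)).mono_fun' (by fun_prop) ?_
  rw [uIoc_of_le zero_le_one]
  refine (ae_restrict_iff' measurableSet_Ioc).2 (ae_of_all _ fun x ⟨hx0, hx1⟩ => ?_)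
  have h1x : 0 ≤ 1 - x := by linarith
  dsimp only
  have hw : x ^ k * (1 - x) ^ n ≤ 1 :=
    mul_le_one₀ (pow_le_one₀ hx0.le hx1) (pow_nonneg h1x n) (pow_le_one₀ h1x (by linarith))
  have hgx : 0 ≤ g x * (1 - x) := mul_nonneg (hnonneg x) h1x
  rw [Real.norm_eq_abs, abs_of_nonneg (mul_nonneg (by positivity) (hnonneg x))]
  calc x ^ k * (1 - x) ^ (n + 1) * g x = x ^ k * (1 - x) ^ n * (g x * (1 - x)) := by ring
    _ ≤ 1 * gstar := mul_le_mul hw (hbound x ⟨hx0.le, hx1⟩) hgx zero_le_one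
    _ = gstar := one_mul gstar

theorem pow_mul_one_sub_pow_succ_mul_abs_sub_le (hnonneg : ∀ x, 0 ≤ g x)
    (hbound : ∀ x ∈ Icc (0:ℝ) 1, g x * (1 - x) ≤ gstar) {q η δ : ℝ} (hη : 0 ≤ η) (hδ : δ ≤ 1)
    (hnear : ∀ x ∈ Ioc 0 δ, |g x - q| ≤ η) (k n : ℕ) {x : ℝ} (hx : x ∈ Ioc (0:ℝ) 1) :
    x ^ k * (1 - x) ^ (n + 1) * |g x - q|
      ≤ η * (x ^ k * (1 - x) ^ (n + 1)) + (gstar + |q|) * (1 - δ) ^ n := by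
  obtain ⟨hx0, hx1⟩ := hx
  have h1x : 0 ≤ 1 - x := by linarith
  have hgx := hbound x ⟨hx0.le, hx1⟩
  have hgstar : 0 ≤ gstar := (mul_nonneg (hnonneg x) h1x).trans hgx
  have hw : 0 ≤ x ^ k * (1 - x) ^ (n + 1) := by positivity
  have hδn : 0 ≤ (1 - δ) ^ n := pow_nonneg (by linarith) n
  rcases le_or_gt x δ with hxδ | hδx
  · nlinarith [mul_le_mul_of_nonneg_left (hnear x ⟨hx0, hxδ⟩) hw, abs_nonneg q]
  · have hgq : (1 - x) * |g x - q| ≤ gstar + |q| := by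
      have : |g x - q| ≤ g x + |q| := by simpa [abs_of_nonneg (hnonneg x)] using abs_sub (g x) q
      nlinarith [abs_nonneg q]
    have hpow : (1 - x) ^ n ≤ (1 - δ) ^ n := pow_le_pow_left₀ h1x (by linarith) n
    calc x ^ k * (1 - x) ^ (n + 1) * |g x - q|
        = x ^ k * ((1 - x) ^ n * ((1 - x) * |g x - q|)) := by ring
      _ ≤ 1 * ((1 - δ) ^ n * (gstar + |q|)) :=
          mul_le_mul (pow_le_one₀ hx0.le hx1) (mul_le_mul hpow hgq (by positivity) hδn)
            (mul_nonneg (pow_nonneg h1x n) (mul_nonneg h1x (abs_nonneg _))) zero_le_one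
      _ ≤ η * (x ^ k * (1 - x) ^ (n + 1)) + (gstar + |q|) * (1 - δ) ^ n := by
          nlinarith [mul_nonneg hη hw]

theorem abs_integral_pow_mul_one_sub_pow_succ_mul_sub_le (hmeas : Measurable g)
    (hnonneg : ∀ x, 0 ≤ g x) (hbound : ∀ x ∈ Icc (0:ℝ) 1, g x * (1 - x) ≤ gstar)
    {q η δ : ℝ} (hη : 0 ≤ η) (hδ : δ ≤ 1) (hnear : ∀ x ∈ Ioc 0 δ, |g x - q| ≤ η) (k n : ℕ) :
    |∫ x in (0:ℝ)..1, x ^ k * (1 - x) ^ (n + 1) * (g x - q)|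
      ≤ η * (∫ x in (0:ℝ)..1, x ^ k * (1 - x) ^ (n + 1)) + (gstar + |q|) * (1 - δ) ^ n := by
  have hweight : IntervalIntegrable (fun x : ℝ => x ^ k * (1 - x) ^ (n + 1)) volume 0 1 :=
    (by fun_prop : Continuous fun x : ℝ => x ^ k * (1 - x) ^ (n + 1)).intervalIntegrable 0 1
  have hint : IntervalIntegrable (fun x => x ^ k * (1 - x) ^ (n + 1) * (g x - q)) volume 0 1 := by
    simp_rw [mul_sub]
    exact (intervalIntegrable_pow_mul_one_sub_pow_succ_mul hmeas hnonneg hbound k n).sub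
      (hweight.mul_const q)
  calc |∫ x in (0:ℝ)..1, x ^ k * (1 - x) ^ (n + 1) * (g x - q)|
      ≤ ∫ x in (0:ℝ)..1, |x ^ k * (1 - x) ^ (n + 1) * (g x - q)| :=
        intervalIntegral.abs_integral_le_integral_abs zero_le_one
    _ ≤ ∫ x in (0:ℝ)..1, (η * (x ^ k * (1 - x) ^ (n + 1)) + (gstar + |q|) * (1 - δ) ^ n) := by
        refine intervalIntegral.integral_mono_on_of_le_Ioo zero_le_one hint.abs
          ((hweight.const_mul η).add intervalIntegrable_const) fun x hx => ?_
        have hw : 0 ≤ x ^ k * (1 - x) ^ (n + 1) :=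
          mul_nonneg (pow_nonneg hx.1.le k) (pow_nonneg (by linarith [hx.2]) _)
        rw [abs_mul, abs_of_nonneg hw]
        exact pow_mul_one_sub_pow_succ_mul_abs_sub_le hnonneg hbound hη hδ hnear k n
          (Ioo_subset_Ioc_self hx)
    _ = η * (∫ x in (0:ℝ)..1, x ^ k * (1 - x) ^ (n + 1)) + (gstar + |q|) * (1 - δ) ^ n := by
        rw [intervalIntegral.integral_add (hweight.const_mul η) intervalIntegrable_const,
          intervalIntegral.integral_const_mul, intervalIntegral.integral_const]
        simp

theorem tendsto_pow_mul_integral_pow_mul_one_sub_pow_succ_mul_sub (hmeas : Measurable g)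
    (hnonneg : ∀ x, 0 ≤ g x) (hbound : ∀ x ∈ Icc (0:ℝ) 1, g x * (1 - x) ≤ gstar) {q : ℝ}
    (hg : Tendsto g (𝓝[>] 0) (𝓝 q)) (k : ℕ) :
    Tendsto (fun n : ℕ => ((n : ℝ) + 1) ^ (k + 1) *
      ∫ x in (0:ℝ)..1, x ^ k * (1 - x) ^ (n + 1) * (g x - q)) atTop (𝓝 0) := by
  refine tendsto_zero_of_forall_abs_le_mul_add (k ! : ℝ) fun η hη => ?_
  obtain ⟨u, hu, hnear⟩ := mem_nhdsGT_iff_exists_Ioc_subset.1 (hg (Metric.closedBall_mem_nhds q hη))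
  set δ := min u (1 / 2)
  have hδ : δ ∈ Ioo (0:ℝ) 1 := ⟨lt_min hu (by norm_num), (min_le_right _ _).trans_lt (by norm_num)⟩
  have hnear' : ∀ x ∈ Ioc 0 δ, |g x - q| ≤ η := fun x hx =>
    hnear ⟨hx.1, hx.2.trans (min_le_left _ _)⟩
  have hr : 0 < 1 - δ := by linarith [hδ.2]
  have hgeom : Tendsto (fun n : ℕ => ((n : ℝ) + 1) ^ (k + 1) * (1 - δ) ^ n) atTop (𝓝 0) := by
    have := ((tendsto_add_atTop_iff_nat 1).2
      (tendsto_pow_const_mul_const_pow_of_lt_one (k + 1) hr.le (by linarith [hδ.1]))).const_mul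
      (1 - δ)⁻¹
    rw [mul_zero] at this
    refine this.congr fun n => ?_
    push_cast
    field_simp
    ring
  refine ⟨fun n => (gstar + |q|) * (((n : ℝ) + 1) ^ (k + 1) * (1 - δ) ^ n), by
    simpa using hgeom.const_mul (gstar + |q|), Eventually.of_forall fun n => ?_⟩
  have hbeta := pow_mul_integral_pow_mul_one_sub_pow_le k (n + 1)
  have herr := abs_integral_pow_mul_one_sub_pow_succ_mul_sub_le hmeas hnonneg hbound hη.le
    hδ.2.le hnear' k n
  push_cast at hbeta
  have hpow : (0:ℝ) ≤ ((n : ℝ) + 1) ^ (k + 1) := by positivity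
  rw [abs_mul, abs_of_nonneg hpow]
  calc ((n : ℝ) + 1) ^ (k + 1) * |∫ x in (0:ℝ)..1, x ^ k * (1 - x) ^ (n + 1) * (g x - q)|
      ≤ ((n : ℝ) + 1) ^ (k + 1) * (η * (∫ x in (0:ℝ)..1, x ^ k * (1 - x) ^ (n + 1))
          + (gstar + |q|) * (1 - δ) ^ n) := mul_le_mul_of_nonneg_left herr hpow
    _ = η * (((n : ℝ) + 1) ^ (k + 1) * ∫ x in (0:ℝ)..1, x ^ k * (1 - x) ^ (n + 1))
          + (gstar + |q|) * (((n : ℝ) + 1) ^ (k + 1) * (1 - δ) ^ n) := by ring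
    _ ≤ η * k ! + (gstar + |q|) * (((n : ℝ) + 1) ^ (k + 1) * (1 - δ) ^ n) := by
        gcongr

theorem tendsto_pow_mul_integral_pow_mul_one_sub_pow_mul (hmeas : Measurable g)
    (hnonneg : ∀ x, 0 ≤ g x) (hbound : ∀ x ∈ Icc (0:ℝ) 1, g x * (1 - x) ≤ gstar) {q : ℝ}
    (hg : Tendsto g (𝓝[>] 0) (𝓝 q)) (k : ℕ) :
    Tendsto (fun m : ℕ => (m : ℝ) ^ (k + 1) * ∫ x in (0:ℝ)..1, x ^ k * (1 - x) ^ m * g x)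
      atTop (𝓝 (q * k !)) := by
  rw [← tendsto_add_atTop_iff_nat 1]
  have hsplit : ∀ n : ℕ, ∫ x in (0:ℝ)..1, x ^ k * (1 - x) ^ (n + 1) * (g x - q)
      = (∫ x in (0:ℝ)..1, x ^ k * (1 - x) ^ (n + 1) * g x)
        - (∫ x in (0:ℝ)..1, x ^ k * (1 - x) ^ (n + 1)) * q := by
    intro n
    simp_rw [mul_sub]
    rw [intervalIntegral.integral_sub
      (intervalIntegrable_pow_mul_one_sub_pow_succ_mul hmeas hnonneg hbound k n)
      ((by fun_prop : Continuous fun x : ℝ => x ^ k * (1 - x) ^ (n + 1) * q).intervalIntegrable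
        0 1),
      intervalIntegral.integral_mul_const]
  have hmain := ((tendsto_pow_mul_integral_pow_mul_one_sub_pow k).comp
    (tendsto_add_atTop_nat 1)).const_mul q
  rw [← add_zero (q * _)]
  refine (hmain.add
    (tendsto_pow_mul_integral_pow_mul_one_sub_pow_succ_mul_sub hmeas hnonneg hbound hg k)).congr
    fun n => ?_
  simp only [Function.comp_apply, hsplit]
  push_cast
  ring

end Weighted

theorem tendsto_nhdsGT_of_abs_sub_le_mul_rpow {g : ℝ → ℝ} {q α ε C : ℝ} (hα : 0 < α) (hε : 0 < ε)
    (h : ∀ x ∈ Ioc (0:ℝ) ε, |g x - q| ≤ C * x ^ α) : Tendsto g (𝓝[>] 0) (𝓝 q) := by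
  have hlim : Tendsto (fun x : ℝ => C * x ^ α) (𝓝[>] 0) (𝓝 0) := by
    have : Tendsto (fun x : ℝ => C * x ^ α) (𝓝[>] 0) (𝓝 (C * 0 ^ α)) :=
      ((Real.continuousAt_rpow_const 0 α (Or.inr hα.le)).tendsto.const_mul C).mono_left
        nhdsWithin_le_nhds
    rwa [Real.zero_rpow hα.ne', mul_zero] at this
  rw [tendsto_iff_norm_sub_tendsto_zero]
  exact squeeze_zero' (Eventually.of_forall fun _ => norm_nonneg _)
    (eventually_of_mem (Ioc_mem_nhdsGT hε) h) hlim

theorem stmt5_general (g : ℝ → ℝ) (hmeas : Measurable g) (hnonneg : ∀ x, 0 ≤ g x)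
    (gstar : ℝ) (hA1 : ∀ x ∈ Icc (0:ℝ) 1, g x * (1 - x) ≤ gstar)
    (q α ε C : ℝ) (hα : 0 < α) (hε : 0 < ε)
    (hA2 : ∀ x ∈ Ioc (0:ℝ) ε, |g x - q| ≤ C * x ^ α)
    (k : ℕ) :
    Tendsto (fun m : ℕ => (m : ℝ) ^ (k + 1) * ∫ x in (0:ℝ)..1, x ^ k * (1 - x) ^ m * g x)
      atTop (nhds (q * Real.Gamma (k + 1))) := by
  rw [Real.Gamma_nat_eq_factorial]
  exact tendsto_pow_mul_integral_pow_mul_one_sub_pow_mul hmeas hnonneg hA1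
    (tendsto_nhdsGT_of_abs_sub_le_mul_rpow hα hε hA2) k

theorem stmt5 (g : ℝ → ℝ) (hmeas : Measurable g) (hnonneg : ∀ x, 0 ≤ g x)
    (gstar : ℝ) (hA1 : ∀ x ∈ Icc (0:ℝ) 1, g x * (1 - x) ≤ gstar)
    (q α ε C : ℝ) (hq : 0 < q) (hα : 0 < α) (hε : 0 < ε)
    (hA2 : ∀ x ∈ Ioc (0:ℝ) ε, |g x - q| ≤ C * x ^ α)
    (k : ℕ) :
    Tendsto (fun m : ℕ => (m : ℝ) ^ (k + 1) * ∫ x in (0:ℝ)..1, x ^ k * (1 - x) ^ m * g x)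
      atTop (nhds (q * Real.Gamma (k + 1))) :=
  stmt5_general g hmeas hnonneg gstar hA1 q α ε C hα hε hA2 k
end

section
/- With B_α(y) = Γ(α+1)Γ(y+1)/Γ(y+α+2) and y ranging over positive integers, for 0 < α ≤ 1/2 the quantity y^α ( y·B_1(y) / (B_0(y) + B_α(y)) − 1 ) converges to −Γ(α+1) as y → ∞. -/
/-!
Since `B_0(y) = 1/(y+1)` and `B_1(y) = 1/((y+1)(y+2))`, with `t = (y+1) B_α(y)` the quantity is
`-y^α (2/(y+2) + t) / (1 + t)`. Log-convexity of `Γ` (Gautschi's inequality) gives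
`Γ(x+α) ~ x^α Γ(x)`, hence `y^α t → Γ(α+1)` and `t → 0`, while `y^α/(y+2) → 0` because `α < 1`.
-/

open Filter

/-- `B_α(y) = Γ(α+1)Γ(y+1)/Γ(y+α+2)`. -/
noncomputable def Bfun (α : ℝ) (y : ℕ) : ℝ :=
  Real.Gamma (α + 1) * Real.Gamma (y + 1) / Real.Gamma (y + α + 2)

open Real

theorem Real.Gamma_add_le_Gamma_mul_rpow {x α : ℝ} (hx : 0 < x) (hα₀ : 0 < α) (hα₁ : α < 1) :
    Gamma (x + α) ≤ Gamma x * x ^ α := by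
  have hΓ : 0 < Gamma x := Gamma_pos_of_pos hx
  have h := Gamma_mul_add_mul_le_rpow_Gamma_mul_rpow_Gamma hx (by linarith : 0 < x + 1)
    (by linarith : 0 < 1 - α) hα₀ (by ring)
  rw [show (1 - α) * x + α * (x + 1) = x + α by ring, Gamma_add_one hx.ne',
    mul_rpow hx.le hΓ.le] at h
  calc Gamma (x + α) ≤ Gamma x ^ (1 - α) * (x ^ α * Gamma x ^ α) := h
    _ = Gamma x ^ (1 - α + α) * x ^ α := by rw [rpow_add hΓ]; ring
    _ = Gamma x * x ^ α := by rw [sub_add_cancel, rpow_one]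

theorem Real.mul_Gamma_le_Gamma_add_mul_rpow {x α : ℝ} (hx : 0 < x) (hα₀ : 0 < α) (hα₁ : α < 1) :
    x * Gamma x ≤ Gamma (x + α) * (x + α) ^ (1 - α) := by
  have h := Gamma_add_le_Gamma_mul_rpow (by linarith : 0 < x + α) (by linarith : 0 < 1 - α)
    (by linarith : 1 - α < 1)
  rwa [show x + α + (1 - α) = x + 1 by ring, Gamma_add_one hx.ne'] at h

theorem Real.tendsto_rpow_mul_Gamma_div_Gamma_add {α : ℝ} (hα₀ : 0 < α) (hα₁ : α < 1) :
    Tendsto (fun x => x ^ α * Gamma x / Gamma (x + α)) atTop (nhds 1) := by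
  have hupper : Tendsto (fun x : ℝ => ((x + α) / x) ^ (1 - α)) atTop (nhds 1) := by
    have h : Tendsto (fun x : ℝ => 1 + α * x⁻¹) atTop (nhds 1) := by
      simpa using (tendsto_inv_atTop_zero.const_mul α).const_add 1
    have h' : Tendsto (fun x : ℝ => (x + α) / x) atTop (nhds 1) :=
      h.congr' <| (eventually_gt_atTop 0).mono fun x hx => by field_simp
    simpa using h'.rpow_const (Or.inl one_ne_zero)
  refine tendsto_of_tendsto_of_tendsto_of_le_of_le' tendsto_const_nhds hupper ?_ ?_
  all_goals filter_upwards [eventually_gt_atTop 0] with x hx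
  all_goals have hxα : 0 < x + α := by linarith
  all_goals have hΓα : 0 < Gamma (x + α) := Gamma_pos_of_pos hxα
  · rw [le_div_iff₀ hΓα, one_mul, mul_comm]
    exact Gamma_add_le_Gamma_mul_rpow hx hα₀ hα₁
  · have hxpow : x ^ (1 - α) = x / x ^ α := by rw [rpow_sub hx, rpow_one]
    have hpow : 0 < x ^ α := rpow_pos_of_pos hx α
    rw [div_rpow hxα.le hx.le, hxpow, div_le_iff₀ hΓα, div_div_eq_mul_div, div_mul_eq_mul_div,
      le_div_iff₀ hx]
    have := mul_Gamma_le_Gamma_add_mul_rpow hx hα₀ hα₁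
    nlinarith

theorem Real.Gamma_natCast_add_two (y : ℕ) :
    Gamma ((y : ℝ) + 2) = ((y : ℝ) + 1) * Gamma ((y : ℝ) + 1) := by
  rw [show (y : ℝ) + 2 = (y + 1) + 1 by ring, Gamma_add_one (by positivity)]

theorem natCast_add_one_mul_Bfun (α : ℝ) (y : ℕ) :
    ((y : ℝ) + 1) * Bfun α y = Gamma (α + 1) * Gamma ((y : ℝ) + 2) / Gamma ((y : ℝ) + α + 2) := by
  rw [Bfun, Gamma_natCast_add_two]
  ring

theorem Bfun_zero (y : ℕ) : Bfun 0 y = 1 / ((y : ℝ) + 1) := by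
  have hΓ : 0 < Gamma ((y : ℝ) + 1) := Gamma_pos_of_pos (by positivity)
  rw [Bfun, zero_add, Gamma_one, add_zero, Gamma_natCast_add_two]
  field_simp

theorem Bfun_one (y : ℕ) : Bfun 1 y = 1 / (((y : ℝ) + 1) * ((y : ℝ) + 2)) := by
  have hΓ : 0 < Gamma ((y : ℝ) + 1) := Gamma_pos_of_pos (by positivity)
  rw [Bfun, one_add_one_eq_two, Gamma_two, show (y : ℝ) + 1 + 2 = ((y : ℝ) + 2) + 1 by ring,
    Gamma_add_one (s := (y : ℝ) + 2) (by positivity), Gamma_natCast_add_two]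
  field_simp

theorem Bfun_nonneg {α : ℝ} (hα : -1 < α) (y : ℕ) : 0 ≤ Bfun α y := by
  have hy : (0 : ℝ) ≤ y := y.cast_nonneg
  have := Gamma_pos_of_pos (show 0 < α + 1 by linarith)
  have := Gamma_pos_of_pos (show 0 < (y : ℝ) + 1 by linarith)
  have := Gamma_pos_of_pos (show 0 < (y : ℝ) + α + 2 by linarith)
  unfold Bfun
  positivity

theorem natCast_mul_Bfun_one_div_sub_one (y : ℕ) {b : ℝ} (hb : 0 ≤ b) :
    (y : ℝ) * Bfun 1 y / (Bfun 0 y + b) - 1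
      = -(2 / ((y : ℝ) + 2) + ((y : ℝ) + 1) * b) / (1 + ((y : ℝ) + 1) * b) := by
  have hy : (0 : ℝ) ≤ y := y.cast_nonneg
  have hden : 0 < 1 + ((y : ℝ) + 1) * b := by positivity
  rw [Bfun_zero, Bfun_one]
  field_simp
  ring

theorem tendsto_rpow_mul_natCast_add_one_mul_Bfun {α : ℝ} (hα₀ : 0 < α) (hα₁ : α < 1) :
    Tendsto (fun y : ℕ => (y : ℝ) ^ α * (((y : ℝ) + 1) * Bfun α y)) atTop
      (nhds (Gamma (α + 1))) := by
  have hratio : Tendsto (fun y : ℕ => ((y : ℝ) / ((y : ℝ) + 2)) ^ α) atTop (nhds 1) := by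
    simpa using (tendsto_natCast_div_add_atTop (2 : ℝ)).rpow_const (Or.inr hα₀.le)
  have hGamma := (tendsto_rpow_mul_Gamma_div_Gamma_add hα₀ hα₁).comp
    (tendsto_atTop_add_const_right _ 2 tendsto_natCast_atTop_atTop)
  have h := (hratio.mul hGamma).const_mul (Gamma (α + 1))
  rw [mul_one, mul_one] at h
  refine h.congr fun y => ?_
  have hy : (0 : ℝ) ≤ y := y.cast_nonneg
  have hy2 : (0 : ℝ) < y + 2 := by linarith
  rw [Function.comp_apply, natCast_add_one_mul_Bfun, div_rpow hy hy2.le,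
    add_right_comm (y : ℝ) 2 α]
  field_simp

theorem tendsto_natCast_rpow_div_add_two {α : ℝ} (hα₁ : α < 1) :
    Tendsto (fun y : ℕ => (y : ℝ) ^ α / ((y : ℝ) + 2)) atTop (nhds 0) := by
  have hpow : Tendsto (fun y : ℕ => (y : ℝ) ^ (α - 1)) atTop (nhds 0) := by
    simpa only [neg_sub, Function.comp_def] using
      (tendsto_rpow_neg_atTop (by linarith : 0 < 1 - α)).comp tendsto_natCast_atTop_atTop
  have h := hpow.mul (tendsto_natCast_div_add_atTop (2 : ℝ))
  rw [zero_mul] at h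
  refine h.congr' <| (eventually_gt_atTop 0).mono fun y hy => ?_
  have hy : (0 : ℝ) < y := by exact_mod_cast hy
  rw [rpow_sub hy, rpow_one]
  field_simp

theorem stmt15 (α : ℝ) (hα : 0 < α) (hα' : α ≤ 1 / 2) :
    Tendsto (fun y : ℕ => (y : ℝ) ^ α *
        ((y : ℝ) * Bfun 1 y / (Bfun 0 y + Bfun α y) - 1)) atTop
      (nhds (-Real.Gamma (α + 1))) := by
  have hα₁ : α < 1 := by linarith
  have hlim := tendsto_rpow_mul_natCast_add_one_mul_Bfun hα hα₁
  have hpow : Tendsto (fun y : ℕ => (y : ℝ) ^ α) atTop atTop :=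
    (tendsto_rpow_atTop hα).comp tendsto_natCast_atTop_atTop
  have hvanish : Tendsto (fun y : ℕ => ((y : ℝ) + 1) * Bfun α y) atTop (nhds 0) :=
    (hlim.div_atTop hpow).congr' <| (eventually_gt_atTop 0).mono fun y hy => by
      have : (0 : ℝ) < (y : ℝ) ^ α := rpow_pos_of_pos (by exact_mod_cast hy) α
      field_simp
  have h := (((tendsto_natCast_rpow_div_add_two hα₁).const_mul 2).add hlim).neg.div
    (tendsto_const_nhds.add hvanish) (by norm_num : (1 : ℝ) + 0 ≠ 0)
  rw [mul_zero, zero_add, add_zero, div_one] at h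
  refine h.congr fun y => ?_
  rw [Pi.div_apply, natCast_mul_Bfun_one_div_sub_one y (Bfun_nonneg (by linarith) y)]
  ring
end
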